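/- arXiv:2409.08542 — 4 statements merged into one kernel-verified Lean document; each statement's English description precedes it below -/
import Mathlib

section
/- Let {e_i}_{i} and {f_j}_{j} be two orthonormal bases of a finite-dimensional complex Hilbert space H. Then for all i, j, the maximum over density operators ρ of (1/2)⟨e_i|ρ|e_i⟩ + (1/2)⟨f_j|ρ|f_j⟩ equals (1/2)(1 + |⟨e_i|f_j⟩|). -/
open Matrix
open scoped ComplexOrder

/-- The inner product ⟨v|w⟩ (conjugate-linear in the first argument). -/
noncomputable def bra {n : Type*} [Fintype n] (v w : n → ℂ) : ℂ := star v ⬝ᵥ w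

/-!
For unit vectors `e`, `f` and any `x`, put `y = ⟪e, x⟫ e + ⟪f, x⟫ f`. Then
`⟪y, x⟫ = |⟪e, x⟫|² + |⟪f, x⟫|² =: S` and `‖y‖² ≤ (1 + |⟪e, f⟫|) S`, so Cauchy–Schwarz gives
`S ≤ (1 + |⟪e, f⟫|) ‖x‖²`. Writing a density matrix as a sum of rank-one terms `v vᴴ` with
`∑ ‖v‖² = 1` bounds the objective by `(1 + |⟪e, f⟫|) / 2`; the pure state along `e + u f`, where
the phase `u` makes `⟪e, u f⟫` real and nonnegative, attains it.
-/

open scoped InnerProductSpace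

section InnerProductSpace

variable {𝕜 E : Type*} [RCLike 𝕜] [NormedAddCommGroup E] [InnerProductSpace 𝕜 E]

theorem norm_inner_sq_add_norm_inner_sq_le {e f : E} (he : ‖e‖ = 1) (hf : ‖f‖ = 1) (x : E) :
    ‖⟪e, x⟫_𝕜‖ ^ 2 + ‖⟪f, x⟫_𝕜‖ ^ 2 ≤ (1 + ‖⟪e, f⟫_𝕜‖) * ‖x‖ ^ 2 := by
  set a := ⟪e, x⟫_𝕜 with ha
  set b := ⟪f, x⟫_𝕜 with hb
  set S := ‖a‖ ^ 2 + ‖b‖ ^ 2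
  set y := a • e + b • f
  have hyx : RCLike.re ⟪y, x⟫_𝕜 = S := by
    simp only [y, inner_add_left, inner_smul_left, ← ha, ← hb, RCLike.conj_mul, map_add]
    norm_cast
  have hyy : ‖y‖ ^ 2 ≤ (1 + ‖⟪e, f⟫_𝕜‖) * S := by
    have hcross : RCLike.re ⟪a • e, b • f⟫_𝕜 ≤ ‖a‖ * ‖b‖ * ‖⟪e, f⟫_𝕜‖ := by
      calc RCLike.re ⟪a • e, b • f⟫_𝕜 ≤ ‖⟪a • e, b • f⟫_𝕜‖ := RCLike.re_le_norm _
        _ = ‖a‖ * ‖b‖ * ‖⟪e, f⟫_𝕜‖ := by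
          rw [inner_smul_left, inner_smul_right, norm_mul, norm_mul, RCLike.norm_conj, mul_assoc]
    rw [norm_add_sq (𝕜 := 𝕜), norm_smul, norm_smul, he, hf]
    nlinarith [norm_nonneg ⟪e, f⟫_𝕜, sq_nonneg (‖a‖ - ‖b‖)]
  have hS : S ^ 2 ≤ (1 + ‖⟪e, f⟫_𝕜‖) * S * ‖x‖ ^ 2 := by
    calc S ^ 2 ≤ (‖y‖ * ‖x‖) ^ 2 :=
          pow_le_pow_left₀ (by positivity) (hyx ▸ re_inner_le_norm y x) 2
      _ = ‖y‖ ^ 2 * ‖x‖ ^ 2 := mul_pow _ _ _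
      _ ≤ (1 + ‖⟪e, f⟫_𝕜‖) * S * ‖x‖ ^ 2 := by gcongr
  rcases (show 0 ≤ S by positivity).eq_or_lt with hS0 | hS0
  · rw [← hS0]; positivity
  · nlinarith

theorem exists_norm_eq_one_norm_inner_sq_add_eq {e f : E} (he : ‖e‖ = 1) (hf : ‖f‖ = 1) :
    ∃ w : E, ‖w‖ = 1 ∧ ‖⟪e, w⟫_𝕜‖ ^ 2 + ‖⟪f, w⟫_𝕜‖ ^ 2 = 1 + ‖⟪e, f⟫_𝕜‖ := by
  obtain ⟨u, hu, hue⟩ := RCLike.exists_norm_eq_mul_self ⟪e, f⟫_𝕜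
  set g := u • f
  set m := ‖⟪e, f⟫_𝕜‖
  have hg : ‖g‖ = 1 := by rw [norm_smul, hu, hf, one_mul]
  have heg : ⟪e, g⟫_𝕜 = m := by rw [inner_smul_right, ← hue]
  have hge : ⟪g, e⟫_𝕜 = m := by rw [← inner_conj_symm, heg, RCLike.conj_ofReal]
  have hfg : ∀ x : E, ‖⟪g, x⟫_𝕜‖ = ‖⟪f, x⟫_𝕜‖ := fun x => by
    rw [inner_smul_left, norm_mul, RCLike.norm_conj, hu, one_mul]
  set v := e + g
  have hv : ‖v‖ ^ 2 = 2 * (1 + m) := by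
    rw [norm_add_sq (𝕜 := 𝕜), he, hg, heg, RCLike.ofReal_re]; ring
  have hv0 : ‖v‖ ≠ 0 := by
    have : 0 ≤ m := norm_nonneg _
    intro h; rw [h] at hv; linarith
  have hev : ⟪e, v⟫_𝕜 = ((1 + m : ℝ) : 𝕜) := by
    rw [inner_add_right, heg, inner_self_eq_norm_sq_to_K, he]; push_cast; ring
  have hgv : ⟪g, v⟫_𝕜 = ((1 + m : ℝ) : 𝕜) := by
    rw [inner_add_right, hge, inner_self_eq_norm_sq_to_K, hg]; push_cast; ring
  refine ⟨(‖v‖⁻¹ : 𝕜) • v, ?_, ?_⟩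
  · rw [norm_smul, norm_inv, RCLike.norm_ofReal, abs_norm, inv_mul_cancel₀ hv0]
  · rw [← hfg, inner_smul_right, inner_smul_right, hev, hgv, norm_mul, norm_inv,
      RCLike.norm_ofReal, RCLike.norm_ofReal, abs_norm, mul_pow, inv_pow, hv,
      abs_of_nonneg (by positivity)]
    field_simp
    ring

end InnerProductSpace

section bra

variable {n : Type*} [Fintype n]

lemma bra_eq_inner (v w : n → ℂ) : bra v w = ⟪WithLp.toLp 2 v, WithLp.toLp 2 w⟫_ℂ := by
  rw [EuclideanSpace.inner_toLp_toLp, bra, dotProduct_comm]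

lemma bra_self (v : n → ℂ) : bra v v = (‖WithLp.toLp 2 v‖ ^ 2 : ℝ) := by
  rw [bra_eq_inner, inner_self_eq_norm_sq_to_K]
  norm_cast

lemma norm_toLp_eq_one_of_bra_self {v : n → ℂ} (hv : bra v v = 1) : ‖WithLp.toLp 2 v‖ = 1 := by
  rw [bra_self, Complex.ofReal_eq_one, pow_eq_one_iff_of_nonneg (norm_nonneg _) two_ne_zero] at hv
  exact hv

lemma bra_sum_right {ι : Type*} (s : Finset ι) (v : n → ℂ) (w : ι → n → ℂ) :
    bra v (∑ k ∈ s, w k) = ∑ k ∈ s, bra v (w k) :=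
  dotProduct_sum _ _ _

lemma bra_vecMulVec_mulVec (v x : n → ℂ) :
    bra x (vecMulVec v (star v) *ᵥ x) = (‖bra x v‖ ^ 2 : ℝ) := by
  rw [vecMulVec_mulVec, op_smul_eq_smul, bra, dotProduct_smul, smul_eq_mul, ← bra, ← bra,
    bra_eq_inner v, bra_eq_inner x, ← inner_conj_symm, RCLike.conj_mul]
  norm_cast

lemma trace_vecMulVec_self_star (v : n → ℂ) : (vecMulVec v (star v)).trace = bra v v := by
  rw [trace_vecMulVec, bra, dotProduct_comm]

theorem Matrix.PosSemidef.re_bra_mulVec_add_re_bra_mulVec_le {ρ : Matrix n n ℂ}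
    (hρ : ρ.PosSemidef) {e f : n → ℂ} (he : bra e e = 1) (hf : bra f f = 1) :
    (bra e (ρ *ᵥ e)).re + (bra f (ρ *ᵥ f)).re ≤ (1 + ‖bra e f‖) * ρ.trace.re := by
  obtain ⟨m, v, rfl⟩ := posSemidef_iff_eq_sum_vecMulVec.mp hρ
  simp only [sum_mulVec, bra_sum_right, trace_sum, Complex.re_sum, bra_vecMulVec_mulVec,
    trace_vecMulVec_self_star, bra_self, Complex.ofReal_re, Finset.mul_sum,
    ← Finset.sum_add_distrib]
  gcongr with k
  simpa only [bra_eq_inner] using norm_inner_sq_add_norm_inner_sq_le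
    (norm_toLp_eq_one_of_bra_self he) (norm_toLp_eq_one_of_bra_self hf) (WithLp.toLp 2 (v k))

end bra

/-- For two orthonormal bases {e_i}, {f_j} of a d-dimensional complex
Hilbert space and all i, j, the maximum over density operators ρ of
(1/2)⟨e_i|ρ|e_i⟩ + (1/2)⟨f_j|ρ|f_j⟩ equals (1/2)(1 + |⟨e_i|f_j⟩|). -/
theorem stmt3 {d : ℕ} (e f : Fin d → (Fin d → ℂ))
    (he : ∀ i j, bra (e i) (e j) = if i = j then 1 else 0)
    (hf : ∀ i j, bra (f i) (f j) = if i = j then 1 else 0) :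
    ∀ i j : Fin d,
      IsGreatest
        {t : ℝ | ∃ ρ : Matrix (Fin d) (Fin d) ℂ, ρ.PosSemidef ∧ ρ.trace = 1 ∧
          t = (1 / 2) * (bra (e i) (ρ.mulVec (e i))).re
            + (1 / 2) * (bra (f j) (ρ.mulVec (f j))).re}
        ((1 / 2) * (1 + ‖bra (e i) (f j)‖)) := by
  intro i j
  have hei : bra (e i) (e i) = 1 := by simpa using he i i
  have hfj : bra (f j) (f j) = 1 := by simpa using hf j j
  refine ⟨?_, ?_⟩
  · obtain ⟨w, hw, hmax⟩ := exists_norm_eq_one_norm_inner_sq_add_eq (𝕜 := ℂ)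
      (norm_toLp_eq_one_of_bra_self hei) (norm_toLp_eq_one_of_bra_self hfj)
    refine ⟨vecMulVec w.ofLp (star w.ofLp), posSemidef_vecMulVec_self_star _, ?_, ?_⟩
    · rw [trace_vecMulVec_self_star, bra_self, WithLp.toLp_ofLp, hw]
      norm_num
    · rw [bra_vecMulVec_mulVec, bra_vecMulVec_mulVec, Complex.ofReal_re, Complex.ofReal_re]
      simp only [bra_eq_inner, WithLp.toLp_ofLp]
      linarith
  · rintro t ⟨ρ, hρ, htr, rfl⟩
    have hle := hρ.re_bra_mulVec_add_re_bra_mulVec_le hei hfj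
    rw [htr, Complex.one_re, mul_one] at hle
    linarith
end

section
/- If Ψ_0 is a unit eigenvector of S = Σ_l r_l T^(l)(x^(l)) corresponding to its largest eigenvalue and tr_out |Ψ_0⟩⟨Ψ_0| = I_in / d_in, then there exists a quantum channel Λ_0 with tr(S J_{Λ_0}) = d_in ‖S‖; i.e., the bound d_in‖S‖ in the generalized fine-grained uncertainty relation is attained. -/
/-
The Choi operator `n • |Ψ₀⟩⟨Ψ₀|` is positive semidefinite, and its partial trace over the output is
`n • (1/n) • 1 = 1`, so by the Choi–Jamiołkowski correspondence it comes from a channel `Λ₀`. Then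
`tr (S J_{Λ₀}) = n ⟨Ψ₀, S Ψ₀⟩ = n ‖S‖`, because `Ψ₀` is a unit eigenvector for the eigenvalue `‖S‖`.
-/

open Matrix
open scoped ComplexOrder

/-- The operator norm of a matrix; for a positive semidefinite matrix this equals
the largest eigenvalue. -/
noncomputable def opNorm {n : Type*} [Fintype n] [DecidableEq n] (A : Matrix n n ℂ) : ℝ :=
  ‖Matrix.toEuclideanCLM (𝕜 := ℂ) (n := n) A‖

/-- The rank-one projection |v⟩⟨v| onto a vector v, as a matrix. -/
noncomputable def proj {n : Type*} (v : n → ℂ) : Matrix n n ℂ :=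
  Matrix.of fun i j => v i * star (v j)

/-- The partial trace over the output (second) system. -/
noncomputable def ptraceOut {n o : ℕ} (M : Matrix (Fin n × Fin o) (Fin n × Fin o) ℂ) :
    Matrix (Fin n) (Fin n) ℂ :=
  Matrix.of fun i j => ∑ k, M (i, k) (j, k)

/-- The (unnormalized) Choi operator J_Λ = (I ⊗ Λ)(P'_+) of a linear map Λ. -/
noncomputable def choi {n o : ℕ}
    (Λ : Matrix (Fin n) (Fin n) ℂ →ₗ[ℂ] Matrix (Fin o) (Fin o) ℂ) :
    Matrix (Fin n × Fin o) (Fin n × Fin o) ℂ :=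
  Matrix.of fun p q => (Λ (Matrix.single p.1 q.1 1)) p.2 q.2

/-- A quantum channel: completely positive (positive semidefinite Choi operator)
and trace preserving. -/
noncomputable def IsChannel {n o : ℕ}
    (Λ : Matrix (Fin n) (Fin n) ℂ →ₗ[ℂ] Matrix (Fin o) (Fin o) ℂ) : Prop :=
  (choi Λ).PosSemidef ∧ ∀ A, (Λ A).trace = A.trace

section Projection

variable {ι : Type*}

lemma proj_eq_vecMulVec (v : ι → ℂ) : proj v = vecMulVec v (star v) := rfl

lemma posSemidef_proj [Fintype ι] (v : ι → ℂ) : (proj v).PosSemidef :=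
  posSemidef_vecMulVec_self_star v

lemma trace_mul_proj [Fintype ι] (S : Matrix ι ι ℂ) (v : ι → ℂ) :
    (S * proj v).trace = star v ⬝ᵥ S *ᵥ v := by
  rw [proj_eq_vecMulVec, mul_vecMulVec, trace_vecMulVec, dotProduct_comm]

end Projection

section ChoiInverse

variable {n o : ℕ}

noncomputable def ofChoi (J : Matrix (Fin n × Fin o) (Fin n × Fin o) ℂ) :
    Matrix (Fin n) (Fin n) ℂ →ₗ[ℂ] Matrix (Fin o) (Fin o) ℂ where
  toFun A := of fun k l => ∑ i, ∑ j, A i j * J (i, k) (j, l)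
  map_add' A B := by
    ext k l
    simp [add_mul, Finset.sum_add_distrib]
  map_smul' c A := by
    ext k l
    simp [Finset.mul_sum, mul_assoc]

lemma ofChoi_apply (J : Matrix (Fin n × Fin o) (Fin n × Fin o) ℂ) (A : Matrix (Fin n) (Fin n) ℂ)
    (k l : Fin o) : ofChoi J A k l = ∑ i, ∑ j, A i j * J (i, k) (j, l) := rfl

lemma choi_ofChoi (J : Matrix (Fin n × Fin o) (Fin n × Fin o) ℂ) : choi (ofChoi J) = J := by
  ext p q
  simp [choi, ofChoi_apply, single_apply, ite_and]

lemma trace_ofChoi (J : Matrix (Fin n × Fin o) (Fin n × Fin o) ℂ) (A : Matrix (Fin n) (Fin n) ℂ) :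
    (ofChoi J A).trace = ∑ i, ∑ j, A i j * ptraceOut J i j := by
  simp only [trace, diag, ofChoi_apply, ptraceOut, of_apply, Finset.mul_sum]
  rw [Finset.sum_comm]
  exact Finset.sum_congr rfl fun i _ => Finset.sum_comm

lemma isChannel_ofChoi {J : Matrix (Fin n × Fin o) (Fin n × Fin o) ℂ} (hJ : J.PosSemidef)
    (hJ₁ : ptraceOut J = 1) : IsChannel (ofChoi J) := by
  refine ⟨(choi_ofChoi J).symm ▸ hJ, fun A => ?_⟩
  rw [trace_ofChoi, hJ₁]
  simp [one_apply, trace]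

lemma ptraceOut_smul (c : ℂ) (M : Matrix (Fin n × Fin o) (Fin n × Fin o) ℂ) :
    ptraceOut (c • M) = c • ptraceOut M := by
  ext i j
  simp [ptraceOut, Finset.mul_sum]

end ChoiInverse

theorem stmt9_general {n o : ℕ}
    (S : Matrix (Fin n × Fin o) (Fin n × Fin o) ℂ)
    (Ψ₀ : Fin n × Fin o → ℂ) (hunit : star Ψ₀ ⬝ᵥ Ψ₀ = 1)
    (heig : S.mulVec Ψ₀ = (opNorm S : ℂ) • Ψ₀)
    (hmarg : ptraceOut (proj Ψ₀) = ((n : ℂ))⁻¹ • 1) :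
    ∃ Λ₀ : Matrix (Fin n) (Fin n) ℂ →ₗ[ℂ] Matrix (Fin o) (Fin o) ℂ,
      IsChannel Λ₀ ∧ (S * choi Λ₀).trace = ((n : ℂ)) * (opNorm S : ℂ) := by
  have hn : (n : ℂ) ≠ 0 := by
    rintro h
    obtain rfl : n = 0 := by exact_mod_cast h
    simp [dotProduct] at hunit
  refine ⟨ofChoi ((n : ℂ) • proj Ψ₀), isChannel_ofChoi ?_ ?_, ?_⟩
  · exact (posSemidef_proj Ψ₀).smul (Nat.cast_nonneg n)
  · rw [ptraceOut_smul, hmarg, smul_smul, mul_inv_cancel₀ hn, one_smul]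
  · rw [choi_ofChoi, Matrix.mul_smul, trace_smul, trace_mul_proj, heig, dotProduct_smul, hunit,
      smul_eq_mul, smul_eq_mul, mul_one]

/-- If Ψ₀ is a unit eigenvector of S = Σ_l r_l T^(l)(x^(l)) for its
largest eigenvalue ‖S‖ and tr_out |Ψ₀⟩⟨Ψ₀| = I/d_in, then there is a channel Λ₀ with
tr(S J_{Λ₀}) = d_in ‖S‖: the bound in the generalized FGUR is attained. -/
theorem stmt9 {n o : ℕ}
    (S : Matrix (Fin n × Fin o) (Fin n × Fin o) ℂ) (hS : S.PosSemidef)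
    (Ψ₀ : Fin n × Fin o → ℂ) (hunit : star Ψ₀ ⬝ᵥ Ψ₀ = 1)
    (heig : S.mulVec Ψ₀ = (opNorm S : ℂ) • Ψ₀)
    (hmarg : ptraceOut (proj Ψ₀) = ((n : ℂ))⁻¹ • 1) :
    ∃ Λ₀ : Matrix (Fin n) (Fin n) ℂ →ₗ[ℂ] Matrix (Fin o) (Fin o) ℂ,
      IsChannel Λ₀ ∧ (S * choi Λ₀).trace = ((n : ℂ)) * (opNorm S : ℂ) :=
  stmt9_general S Ψ₀ hunit heig hmarg
end

section
/- Let U, V be unitary operators on a 2-dimensional Hilbert space with tr(U†V) ≠ 0. Then W = (2 + |tr(U†V)|)^{-1/2} (U + (tr(V†U)/|tr(U†V)|) V) is unitary. -/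
/-!
For a `2 × 2` unitary `A` with trace `t`, the adjugate is both `t • 1 - A` and `det A • Aᴴ`, which
gives `conj t • A + t • Aᴴ = |t|² • 1`. Applied to `A = U†V`, with the phase `c = conj t / |t|`
the cross terms of `(U + c V)†(U + c V) = 2 + c A + conj c A†` collapse to `|t| • 1`, so
`U + c V` is `√(2 + |t|)` times a unitary.
-/

open Matrix

theorem Complex.star_div_norm_mem_unitary {z : ℂ} (hz : z ≠ 0) : star z / (‖z‖ : ℂ) ∈ unitary ℂ := by
  have hnorm : (‖z‖ : ℂ) ≠ 0 := by exact_mod_cast norm_ne_zero_iff.mpr hz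
  rw [Unitary.mem_iff_star_mul_self, star_div₀, star_star, Complex.star_def, Complex.conj_ofReal,
    div_mul_div_comm, Complex.mul_conj']
  field_simp

namespace Matrix

theorem adjugate_fin_two_eq_trace_smul_one_sub {R : Type*} [CommRing R]
    (A : Matrix (Fin 2) (Fin 2) R) : A.adjugate = A.trace • 1 - A := by
  rw [adjugate_fin_two]
  ext i j
  fin_cases i <;> fin_cases j <;> simp [trace_fin_two]

variable {R : Type*} [CommRing R] [StarRing R]

theorem adjugate_eq_det_smul_conjTranspose_of_mem_unitaryGroup {n : Type*} [Fintype n]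
    [DecidableEq n] {A : Matrix n n R} (hA : A ∈ unitaryGroup n R) :
    A.adjugate = A.det • Aᴴ :=
  calc A.adjugate = (Aᴴ * A) * A.adjugate := by rw [← star_eq_conjTranspose, hA.1, one_mul]
    _ = Aᴴ * (A * A.adjugate) := Matrix.mul_assoc _ _ _
    _ = A.det • Aᴴ := by rw [mul_adjugate, Matrix.mul_smul, Matrix.mul_one]

theorem star_trace_smul_add_trace_smul_conjTranspose_of_mem_unitaryGroup
    {A : Matrix (Fin 2) (Fin 2) R} (hA : A ∈ unitaryGroup (Fin 2) R) :
    star A.trace • A + A.trace • Aᴴ = (star A.trace * A.trace) • 1 := by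
  have hdet : star A.det * A.det = 1 := (det_of_mem_unitary hA).1
  have hconj : Aᴴ = star A.det • (A.trace • 1 - A) := by
    rw [← adjugate_fin_two_eq_trace_smul_one_sub,
      adjugate_eq_det_smul_conjTranspose_of_mem_unitaryGroup hA, smul_smul, hdet, one_smul]
  have htrace : star A.trace = star A.det * A.trace := by
    rw [← trace_conjTranspose, hconj, trace_smul, trace_sub, trace_smul, trace_one]
    simp only [Fintype.card_fin, smul_eq_mul]
    ring
  rw [hconj, htrace]
  module

variable {n : Type*} [Fintype n] [DecidableEq n]

theorem conjTranspose_mul_self_add_smul_of_mem_unitaryGroup {U V : Matrix n n R}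
    (hU : U ∈ unitaryGroup n R) (hV : V ∈ unitaryGroup n R) {c : R} (hc : c ∈ unitary R) :
    (U + c • V)ᴴ * (U + c • V) = (2 : R) • 1 + (c • (Uᴴ * V) + star c • (Uᴴ * V)ᴴ) := by
  have hUU : Uᴴ * U = 1 := hU.1
  have hVV : Vᴴ * V = 1 := hV.1
  simp only [conjTranspose_add, conjTranspose_smul, conjTranspose_mul, conjTranspose_conjTranspose,
    add_mul, Matrix.mul_add, Matrix.smul_mul, Matrix.mul_smul, smul_smul, hUU, hVV, hc.2]
  module

end Matrix

theorem Matrix.phase_smul_add_star_smul_conjTranspose_of_mem_unitaryGroup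
    {A : Matrix (Fin 2) (Fin 2) ℂ} (hA : A ∈ unitaryGroup (Fin 2) ℂ) (ht : A.trace ≠ 0) :
    (star A.trace / (‖A.trace‖ : ℂ)) • A + star (star A.trace / (‖A.trace‖ : ℂ)) • Aᴴ
      = (‖A.trace‖ : ℂ) • 1 := by
  have hnorm : (‖A.trace‖ : ℂ) ≠ 0 := by exact_mod_cast norm_ne_zero_iff.mpr ht
  have hsq : star A.trace * A.trace = (‖A.trace‖ : ℂ) ^ 2 := Complex.conj_mul' _
  rw [star_div₀, star_star, Complex.star_def, Complex.conj_ofReal, div_eq_inv_mul,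
    div_eq_inv_mul, ← smul_smul, ← smul_smul, ← smul_add, ← Complex.star_def,
    star_trace_smul_add_trace_smul_conjTranspose_of_mem_unitaryGroup hA, smul_smul, hsq]
  congr 1
  field_simp

theorem Matrix.inv_sqrt_smul_mem_unitaryGroup {n : Type*} [Fintype n] [DecidableEq n]
    {M : Matrix n n ℂ} {r : ℝ} (hr : 0 < r) (hM : Mᴴ * M = (r : ℂ) • 1) :
    (Real.sqrt r : ℂ)⁻¹ • M ∈ unitaryGroup n ℂ := by
  have hsqrt : (Real.sqrt r : ℂ) ≠ 0 := by exact_mod_cast (Real.sqrt_pos.mpr hr).ne'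
  have hr' : (Real.sqrt r : ℂ) ^ 2 = r := by exact_mod_cast Real.sq_sqrt hr.le
  rw [mem_unitaryGroup_iff', star_smul, star_eq_conjTranspose, smul_mul_smul_comm, hM, smul_smul,
    Complex.star_def, map_inv₀, Complex.conj_ofReal, ← hr']
  field_simp
  exact one_smul _ _

/-- For unitaries U, V on a 2-dimensional Hilbert space with
tr(U†V) ≠ 0, the operator W = (2 + |tr(U†V)|)^{-1/2}(U + (tr(V†U)/|tr(U†V)|)V)
is unitary. -/
theorem stmt14 (U V : Matrix (Fin 2) (Fin 2) ℂ)
    (hU : U ∈ Matrix.unitaryGroup (Fin 2) ℂ)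
    (hV : V ∈ Matrix.unitaryGroup (Fin 2) ℂ)
    (hs : (Uᴴ * V).trace ≠ 0) :
    (((Real.sqrt (2 + ‖(Uᴴ * V).trace‖) : ℂ))⁻¹ •
        (U + ((Vᴴ * U).trace / ((‖(Uᴴ * V).trace‖ : ℝ) : ℂ)) • V))
      ∈ Matrix.unitaryGroup (Fin 2) ℂ := by
  have hA : Uᴴ * V ∈ unitaryGroup (Fin 2) ℂ := mul_mem (Unitary.star_mem hU) hV
  have htrace : (Vᴴ * U).trace = star (Uᴴ * V).trace := by
    rw [← trace_conjTranspose, conjTranspose_mul, conjTranspose_conjTranspose]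
  rw [htrace]
  refine inv_sqrt_smul_mem_unitaryGroup (by positivity) ?_
  rw [conjTranspose_mul_self_add_smul_of_mem_unitaryGroup hU hV
      (Complex.star_div_norm_mem_unitary hs), phase_smul_add_star_smul_conjTranspose_of_mem_unitaryGroup hA hs]
  push_cast
  module
end

section
/- Let d = 2, and let |Ψ^(1)⟩ = (I ⊗ U_1)|Ψ_+⟩, |Ψ^(2)⟩ = (I ⊗ U_2)|Ψ_+⟩ be maximally entangled unit vectors with tr(U_1†U_2) ≠ 0, and let W be the unitary of the previous construction. Then (I ⊗ W)|Ψ_+⟩ = (2(1 + |⟨Ψ^(1)|Ψ^(2)⟩|))^{-1/2} ( |Ψ^(1)⟩ + (⟨Ψ^(2)|Ψ^(1)⟩/|⟨Ψ^(1)|Ψ^(2)⟩|) |Ψ^(2)⟩ ), and this vector is a unit eigenvector of |Ψ^(1)⟩⟨Ψ^(1)| + |Ψ^(2)⟩⟨Ψ^(2)| with eigenvalue 1 + |⟨Ψ^(1)|Ψ^(2)⟩|. -/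
/-!
The map `M ↦ (I ⊗ M)|Ψ₊⟩` is linear and `⟨(I ⊗ A)Ψ₊|(I ⊗ B)Ψ₊⟩ = tr(A†B)/d`, so `(I ⊗ W)|Ψ₊⟩`
is the normalised combination `c (Ψ¹ + u Ψ²)` of the two states, with `u = ⟨Ψ²|Ψ¹⟩/|⟨Ψ¹|Ψ²⟩|`.
For unit vectors `ψ₁, ψ₂` with `z = ⟨ψ₁|ψ₂⟩ ≠ 0`, this phase makes `u z = |z|` real, so
`w = ψ₁ + u ψ₂` has `⟨ψ₁|w⟩ = 1 + |z|` and `⟨ψ₂|w⟩ = (1 + |z|) u`. Hence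
`(|ψ₁⟩⟨ψ₁| + |ψ₂⟩⟨ψ₂|) w = (1 + |z|) w`, and `⟨w|w⟩ = 2 (1 + |z|)` since `|u| = 1`.
-/

open Matrix Kronecker
open scoped ComplexOrder

/-- The maximally entangled state |Ψ₊⟩ = (1/√d) Σ_i |i⟩⊗|i⟩. -/
noncomputable def maxEnt (d : ℕ) : Fin d × Fin d → ℂ :=
  fun p => if p.1 = p.2 then ((Real.sqrt d : ℂ))⁻¹ else 0

section Bra

variable {n : Type*} [Fintype n]

lemma star_bra (v w : n → ℂ) : star (bra v w) = bra w v :=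
  (star_dotProduct w v).symm

lemma bra_add_right (u v w : n → ℂ) : bra u (v + w) = bra u v + bra u w :=
  dotProduct_add _ _ _

lemma bra_smul_right (c : ℂ) (v w : n → ℂ) : bra v (c • w) = c * bra v w :=
  dotProduct_smul _ _ _

lemma bra_add_left (u v w : n → ℂ) : bra (u + v) w = bra u w + bra v w := by
  simp only [bra, star_add, add_dotProduct]

lemma bra_smul_left (c : ℂ) (v w : n → ℂ) : bra (c • v) w = star c * bra v w := by
  simp only [bra, star_smul, smul_dotProduct, smul_eq_mul]

lemma proj_mulVec (v w : n → ℂ) : proj v *ᵥ w = bra v w • v := by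
  funext i
  simp only [proj, mulVec, dotProduct, of_apply, bra, Pi.smul_apply, smul_eq_mul,
    Finset.sum_mul, Pi.star_apply]
  exact Finset.sum_congr rfl fun j _ => by ring

end Bra

section PhaseAlignedSum

variable {n : Type*} [Fintype n] {ψ₁ ψ₂ : n → ℂ}

lemma bra_phaseAlignedSum_left (h₁ : bra ψ₁ ψ₁ = 1) :
    bra ψ₁ (ψ₁ + (bra ψ₂ ψ₁ / ‖bra ψ₁ ψ₂‖) • ψ₂) = 1 + ‖bra ψ₁ ψ₂‖ := by
  rw [bra_add_right, bra_smul_right, h₁, ← star_bra, div_mul_eq_mul_div, Complex.star_def,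
    Complex.conj_mul', sq, mul_self_div_self]

lemma bra_phaseAlignedSum_right (h₂ : bra ψ₂ ψ₂ = 1) (hz : bra ψ₁ ψ₂ ≠ 0) :
    bra ψ₂ (ψ₁ + (bra ψ₂ ψ₁ / ‖bra ψ₁ ψ₂‖) • ψ₂)
      = (1 + ‖bra ψ₁ ψ₂‖) * (bra ψ₂ ψ₁ / ‖bra ψ₁ ψ₂‖) := by
  have hnorm : (‖bra ψ₁ ψ₂‖ : ℂ) ≠ 0 := by exact_mod_cast norm_ne_zero_iff.mpr hz
  rw [bra_add_right, bra_smul_right, h₂]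
  field_simp
  ring

lemma star_phase_mul_phase (hz : bra ψ₁ ψ₂ ≠ 0) :
    star (bra ψ₂ ψ₁ / ‖bra ψ₁ ψ₂‖) * (bra ψ₂ ψ₁ / ‖bra ψ₁ ψ₂‖) = 1 := by
  rw [Complex.star_def, Complex.conj_mul', norm_div, ← star_bra, norm_star, Complex.norm_real,
    norm_norm, div_self (norm_ne_zero_iff.mpr hz), Complex.ofReal_one, one_pow]

lemma proj_add_proj_mulVec_phaseAlignedSum (h₁ : bra ψ₁ ψ₁ = 1) (h₂ : bra ψ₂ ψ₂ = 1)
    (hz : bra ψ₁ ψ₂ ≠ 0) :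
    (proj ψ₁ + proj ψ₂) *ᵥ (ψ₁ + (bra ψ₂ ψ₁ / ‖bra ψ₁ ψ₂‖) • ψ₂)
      = (1 + ‖bra ψ₁ ψ₂‖ : ℂ) • (ψ₁ + (bra ψ₂ ψ₁ / ‖bra ψ₁ ψ₂‖) • ψ₂) := by
  rw [add_mulVec, proj_mulVec, proj_mulVec, bra_phaseAlignedSum_left h₁,
    bra_phaseAlignedSum_right h₂ hz, smul_add, mul_smul]

lemma bra_phaseAlignedSum_self (h₁ : bra ψ₁ ψ₁ = 1) (h₂ : bra ψ₂ ψ₂ = 1)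
    (hz : bra ψ₁ ψ₂ ≠ 0) :
    bra (ψ₁ + (bra ψ₂ ψ₁ / ‖bra ψ₁ ψ₂‖) • ψ₂) (ψ₁ + (bra ψ₂ ψ₁ / ‖bra ψ₁ ψ₂‖) • ψ₂)
      = 2 * (1 + ‖bra ψ₁ ψ₂‖) := by
  rw [bra_add_left, bra_smul_left, bra_phaseAlignedSum_left h₁, bra_phaseAlignedSum_right h₂ hz,
    mul_left_comm, star_phase_mul_phase hz]
  ring

end PhaseAlignedSum

lemma bra_inv_sqrt_smul_self {n : Type*} [Fintype n] {w : n → ℂ} {r : ℝ} (hr : 0 < r)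
    (hw : bra w w = r) : bra ((√r : ℂ)⁻¹ • w) ((√r : ℂ)⁻¹ • w) = 1 := by
  have hsqrt : (√r : ℂ) ≠ 0 := by exact_mod_cast (Real.sqrt_pos.mpr hr).ne'
  rw [bra_smul_left, bra_smul_right, hw, star_inv₀, Complex.star_def, Complex.conj_ofReal]
  field_simp
  exact_mod_cast (Real.sq_sqrt hr.le).symm

section MaximallyEntangled

variable {d : ℕ}

lemma one_kronecker_mulVec_maxEnt (M : Matrix (Fin d) (Fin d) ℂ) :
    ((1 : Matrix (Fin d) (Fin d) ℂ) ⊗ₖ M) *ᵥ maxEnt d = fun p => M p.2 p.1 / √d := by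
  funext ⟨i, j⟩
  simp [mulVec, dotProduct, Fintype.sum_prod_type, maxEnt, one_apply, div_eq_mul_inv]

lemma bra_one_kronecker_mulVec_maxEnt (A B : Matrix (Fin d) (Fin d) ℂ) :
    bra (((1 : Matrix (Fin d) (Fin d) ℂ) ⊗ₖ A) *ᵥ maxEnt d)
      (((1 : Matrix (Fin d) (Fin d) ℂ) ⊗ₖ B) *ᵥ maxEnt d) = (Aᴴ * B).trace / d := by
  have hd : star (√d : ℂ) * √d = d := by
    rw [Complex.star_def, Complex.conj_ofReal, ← Complex.ofReal_mul,
      Real.mul_self_sqrt d.cast_nonneg, Complex.ofReal_natCast]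
  simp only [bra, one_kronecker_mulVec_maxEnt, dotProduct, Pi.star_apply, star_div₀,
    Fintype.sum_prod_type, trace, diag, mul_apply, conjTranspose_apply, Finset.sum_div]
  refine Finset.sum_congr rfl fun i _ => Finset.sum_congr rfl fun j _ => ?_
  rw [div_mul_div_comm, hd]

lemma bra_one_kronecker_mulVec_maxEnt_self [NeZero d] {U : Matrix (Fin d) (Fin d) ℂ}
    (hU : U ∈ unitaryGroup (Fin d) ℂ) :
    bra (((1 : Matrix (Fin d) (Fin d) ℂ) ⊗ₖ U) *ᵥ maxEnt d)
      (((1 : Matrix (Fin d) (Fin d) ℂ) ⊗ₖ U) *ᵥ maxEnt d) = 1 := by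
  rw [bra_one_kronecker_mulVec_maxEnt, ← star_eq_conjTranspose, hU.1, trace_one]
  simp [NeZero.ne d]

end MaximallyEntangled

/-- In dimension 2, for |Ψ^(k)⟩ = (I ⊗ U_k)|Ψ₊⟩ with tr(U₁†U₂) ≠ 0 and
W = (2+|tr(U₁†U₂)|)^{-1/2}(U₁ + (tr(U₂†U₁)/|tr(U₁†U₂)|)U₂), the vector (I ⊗ W)|Ψ₊⟩
equals (2(1+|⟨Ψ^(1)|Ψ^(2)⟩|))^{-1/2}(|Ψ^(1)⟩ + (⟨Ψ^(2)|Ψ^(1)⟩/|⟨Ψ^(1)|Ψ^(2)⟩|)|Ψ^(2)⟩),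
and is a unit eigenvector of |Ψ^(1)⟩⟨Ψ^(1)| + |Ψ^(2)⟩⟨Ψ^(2)| with eigenvalue
1 + |⟨Ψ^(1)|Ψ^(2)⟩|. -/
theorem stmt16 (U₁ U₂ : Matrix (Fin 2) (Fin 2) ℂ)
    (hU₁ : U₁ ∈ Matrix.unitaryGroup (Fin 2) ℂ)
    (hU₂ : U₂ ∈ Matrix.unitaryGroup (Fin 2) ℂ)
    (hs : (U₁ᴴ * U₂).trace ≠ 0)
    (W : Matrix (Fin 2) (Fin 2) ℂ)
    (hW : W = ((Real.sqrt (2 + ‖(U₁ᴴ * U₂).trace‖) : ℂ))⁻¹ •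
      (U₁ + ((U₂ᴴ * U₁).trace / ((‖(U₁ᴴ * U₂).trace‖ : ℝ) : ℂ)) • U₂))
    (Ψ₁ Ψ₂ v : Fin 2 × Fin 2 → ℂ)
    (hΨ₁ : Ψ₁ = ((1 : Matrix (Fin 2) (Fin 2) ℂ) ⊗ₖ U₁).mulVec (maxEnt 2))
    (hΨ₂ : Ψ₂ = ((1 : Matrix (Fin 2) (Fin 2) ℂ) ⊗ₖ U₂).mulVec (maxEnt 2))
    (hv : v = ((1 : Matrix (Fin 2) (Fin 2) ℂ) ⊗ₖ W).mulVec (maxEnt 2)) :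
    v = ((Real.sqrt (2 * (1 + ‖bra Ψ₁ Ψ₂‖)) : ℂ))⁻¹ •
        (Ψ₁ + (bra Ψ₂ Ψ₁ / ((‖bra Ψ₁ Ψ₂‖ : ℝ) : ℂ)) • Ψ₂) ∧
    bra v v = 1 ∧
    (proj Ψ₁ + proj Ψ₂).mulVec v = ((1 + ‖bra Ψ₁ Ψ₂‖ : ℝ) : ℂ) • v := by
  have h₁ : bra Ψ₁ Ψ₁ = 1 := hΨ₁ ▸ bra_one_kronecker_mulVec_maxEnt_self hU₁
  have h₂ : bra Ψ₂ Ψ₂ = 1 := hΨ₂ ▸ bra_one_kronecker_mulVec_maxEnt_self hU₂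
  have h₁₂ : bra Ψ₁ Ψ₂ = (U₁ᴴ * U₂).trace / 2 := by
    rw [hΨ₁, hΨ₂, bra_one_kronecker_mulVec_maxEnt, Nat.cast_ofNat]
  have h₂₁ : bra Ψ₂ Ψ₁ = (U₂ᴴ * U₁).trace / 2 := by
    rw [hΨ₁, hΨ₂, bra_one_kronecker_mulVec_maxEnt, Nat.cast_ofNat]
  have hz : bra Ψ₁ Ψ₂ ≠ 0 := h₁₂ ▸ div_ne_zero hs two_ne_zero
  have hv' : v = ((Real.sqrt (2 * (1 + ‖bra Ψ₁ Ψ₂‖)) : ℂ))⁻¹ •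
      (Ψ₁ + (bra Ψ₂ Ψ₁ / ((‖bra Ψ₁ Ψ₂‖ : ℝ) : ℂ)) • Ψ₂) := by
    rw [hv, hW, kronecker_smul, kronecker_add, kronecker_smul, smul_mulVec, add_mulVec,
      smul_mulVec, ← hΨ₁, ← hΨ₂, h₁₂, h₂₁, norm_div, Complex.norm_two,
      show 2 * (1 + ‖(U₁ᴴ * U₂).trace‖ / 2) = 2 + ‖(U₁ᴴ * U₂).trace‖ by ring,
      Complex.ofReal_div, Complex.ofReal_ofNat, div_div_div_cancel_right₀ two_ne_zero]
  refine ⟨hv', ?_, ?_⟩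
  · rw [hv']
    exact bra_inv_sqrt_smul_self (by positivity) (mod_cast bra_phaseAlignedSum_self h₁ h₂ hz)
  · rw [hv', mulVec_smul, proj_add_proj_mulVec_phaseAlignedSum h₁ h₂ hz, smul_comm]
    norm_cast
end
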